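/- (Twisted generalized Catalan/dessin recursion.) Let (A, η) be a finite-dimensional commutative Frobenius algebra over a field K with basis e₁, …, e_s, Euler element 𝐞, and amplitudes Ω_{g,n}(v₁,…,vₙ) = ε(v₁⋯vₙ·𝐞^g). Suppose given, for all integers g ≥ 0 and n ≥ 1, functions C_{g,n} : (ℤ_{≥0})^n → K (with the convention C_{g,n} := 0 whenever g < 0) which satisfy, for every (g,n) with 2g−2+n > 0 and every (μ₁,…,μₙ) ∈ (ℤ_{≥0})^n with μ₁ ≥ 1, the recursion C_{g,n}(μ₁,…,μₙ) = Σ_{j=2}^{n} μ_j C_{g,n−1}(μ₁+μ_j−2, μ_{[n]∖{1,j}}) + Σ_{α+β=μ₁−2, α,β ≥ 0} ( C_{g−1,n+1}(α, β, μ₂,…,μₙ) + Σ_{g₁+g₂=g} Σ_{I ⊔ J = {2,…,n}} C_{g₁,|I|+1}(α, μ_I) · C_{g₂,|J|+1}(β, μ_J) ). Define 𝒞_{g,n}(μ₁,…,μₙ; v₁,…,vₙ) := C_{g,n}(μ₁,…,μₙ) · Ω_{g,n}(v₁,…,vₙ). Then for every (g,n) with 2g−2+n > 0, every μ with μ₁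 ≥ 1 and all v₁,…,vₙ ∈ A: 𝒞_{g,n}(μ; v₁,…,vₙ) = Σ_{j=2}^{n} μ_j 𝒞_{g,n−1}(μ₁+μ_j−2, μ_{[n]∖{1,j}}; v₁·v_j, v_{[n]∖{1,j}}) + Σ_{α+β=μ₁−2} ( Σ_{i,j,a,b} η(v₁, e_i·e_j) η^{ia} η^{jb} 𝒞_{g−1,n+1}(α, β, μ₂,…,μₙ; e_a, e_b, v₂,…,vₙ) + Σ_{g₁+g₂=g} Σ_{I ⊔ J = {2,…,n}} Σ_{k,ℓ,a,b} η(v₁, e_k·e_ℓ) η^{ka} η^{ℓb} 𝒞_{g₁,|I|+1}(α, μ_I; e_a, v_I) · 𝒞_{g₂,|J|+1}(β, μ_J; e_b, v_J) ). -/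

import Mathlib

/-- The subtuple of a tuple `f : Fin m → α` indexed by a finite set `S` of indices,
taken in increasing order. -/
noncomputable def subT {α : Type*} {m : ℕ} (f : Fin m → α) (S : Finset (Fin m)) :
    Fin S.card → α :=
  fun i => f (S.orderIsoOfFin rfl i)

/-- The 2D TQFT twist `𝒞_{g,n}(μ; v₁,…,vₙ) := C_{g,n}(μ)·Ω_{g,n}(v₁,…,vₙ)` of a counting
function `C`, where `Ω_{g,n}(v₁,…,vₙ) = ε(v₁⋯vₙ·𝐞^g)`, `ε = η(1,·)` and `E = 𝐞` is the
Euler element (for `g < 0` the convention `C_{g,n} = 0` makes the value vanish). -/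
noncomputable def twistC {K A : Type*} [Field K] [CommRing A] [Algebra K A]
    (η : LinearMap.BilinForm K A) (E : A)
    (C : ℤ → (n : ℕ) → (Fin n → ℕ) → K)
    (g : ℤ) (n : ℕ) (μ : Fin n → ℕ) (v : Fin n → A) : K :=
  C g n μ * η 1 ((∏ i, v i) * E ^ g.toNat)

/-!
Every term of the twisted recursion is the corresponding term of the recursion for `C`
multiplied by one and the same amplitude `Ω_{g,n}(v) = ε(v₁⋯vₙ 𝐞^g)`. For the cut-and-join terms
this is just `v₁ v_j ∏_{i ≠ 1, j} v_i = ∏ v_i`. The other two terms contract with the coproduct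
`Δ(u) = Σ η(u, e_i e_j) η^{ia} η^{jb} e_a ⊗ e_b`. Invariance of `η` and the expansion
`x = Σ_i η(x, e_i) ê_i` in the dual basis `ê_i = Σ_a η^{ia} e_a` give `Δ(u) = Σ_j u e_j ⊗ ê_j`.
Multiplying the two legs therefore yields `u 𝐞` (one more handle), while pairing them separately
with `X` and `Y` yields `ε(u X Y)` (two amplitudes glued into one).
-/

theorem prod_subT {M : Type*} [CommMonoid M] {m : ℕ} (f : Fin m → M) (S : Finset (Fin m)) :
    ∏ i, subT f S i = ∏ x ∈ S, f x := by
  rw [← Finset.prod_coe_sort S f]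
  exact Fintype.prod_equiv (S.orderIsoOfFin rfl).toEquiv _ _ fun _ => rfl

theorem mul_mul_prod_compl_singleton_tail {M : Type*} [CommMonoid M] {m : ℕ}
    (v : Fin (m + 1) → M) (j : Fin m) :
    v 0 * v j.succ * ∏ x ∈ ({j}ᶜ : Finset (Fin m)), Fin.tail v x = ∏ i, v i := by
  rw [Fin.prod_univ_succ, Finset.compl_singleton, mul_assoc]
  exact congrArg _ (Finset.mul_prod_erase Finset.univ (Fin.tail v) (Finset.mem_univ j))

section DualBasis

variable {K A : Type*} [CommSemiring K] [AddCommMonoid A] [Module K A]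
  (η : LinearMap.BilinForm K A) {s : ℕ} (e : Module.Basis (Fin s) K A)
  (N : Matrix (Fin s) (Fin s) K)

noncomputable def dualBasisVec (i : Fin s) : A := ∑ a, N i a • e a

variable {η e N}

theorem sum_apply_basis_mul_eq_repr (hN : (Matrix.of fun i j => η (e i) (e j)) * N = 1)
    (x : A) (a : Fin s) : ∑ i, η x (e i) * N i a = e.repr x a := by
  have hGN : ∀ p, ∑ i, η (e p) (e i) * N i a = if p = a then 1 else 0 := fun p => by
    simpa [Matrix.mul_apply, Matrix.one_apply] using congrFun (congrFun hN p) a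
  conv_lhs => rw [← e.sum_repr x]
  simp only [map_sum, map_smul, LinearMap.sum_apply, LinearMap.smul_apply, smul_eq_mul,
    Finset.sum_mul, mul_assoc]
  rw [Finset.sum_comm]
  simp [← Finset.mul_sum, hGN]

theorem sum_smul_dualBasisVec (hN : (Matrix.of fun i j => η (e i) (e j)) * N = 1) (x : A) :
    ∑ i, η x (e i) • dualBasisVec e N i = x := by
  simp only [dualBasisVec, Finset.smul_sum, smul_smul]
  rw [Finset.sum_comm]
  simp only [← Finset.sum_smul, sum_apply_basis_mul_eq_repr hN, e.sum_repr]

theorem sum_mul_apply_dualBasisVec (hN : (Matrix.of fun i j => η (e i) (e j)) * N = 1)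
    (f : A →ₗ[K] K) (x : A) : ∑ i, η x (e i) * f (dualBasisVec e N i) = f x := by
  simpa using congrArg f (sum_smul_dualBasisVec hN x)

theorem sum_sum_mul_mul_apply (f : A →ₗ[K] A →ₗ[K] K) (i j : Fin s) :
    (∑ a, ∑ b, N i a * N j b * f (e a) (e b) : K) =
      f (dualBasisVec e N i) (dualBasisVec e N j) := by
  simp only [dualBasisVec, map_sum, map_smul, LinearMap.sum_apply, LinearMap.smul_apply,
    smul_eq_mul, Finset.mul_sum, mul_assoc]
  rw [Finset.sum_comm]
  exact Finset.sum_congr rfl fun _ _ => Finset.sum_congr rfl fun _ _ => mul_left_comm _ _ _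

end DualBasis

section Frobenius

variable {K A : Type*} [CommSemiring K] [CommSemiring A] [Algebra K A]
  {η : LinearMap.BilinForm K A} {s : ℕ} {e : Module.Basis (Fin s) K A}
  {N : Matrix (Fin s) (Fin s) K}

theorem apply_eq_apply_one_mul (hinv : ∀ u v w : A, η (u * v) w = η u (v * w)) (x y : A) :
    η x y = η 1 (x * y) := by
  rw [← hinv, one_mul]

/-- The left side is `f` evaluated on the coproduct `Δ(u)`: this says `Δ(u) = Σ_j u e_j ⊗ ê_j`. -/
theorem sum_coproduct_apply (hinv : ∀ u v w : A, η (u * v) w = η u (v * w))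
    (hN : (Matrix.of fun i j => η (e i) (e j)) * N = 1) (f : A →ₗ[K] A →ₗ[K] K) (u : A) :
    ∑ i, ∑ j, ∑ a, ∑ b, η u (e i * e j) * N i a * N j b * f (e a) (e b) =
      ∑ j, f (u * e j) (dualBasisVec e N j) := by
  calc (∑ i, ∑ j, ∑ a, ∑ b, η u (e i * e j) * N i a * N j b * f (e a) (e b))
      = ∑ j, ∑ i, η (u * e j) (e i) * f (dualBasisVec e N i) (dualBasisVec e N j) := by
        rw [Finset.sum_comm]
        simp only [← sum_sum_mul_mul_apply, Finset.mul_sum, hinv, mul_comm (e _) (e _), mul_assoc]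
    _ = ∑ j, f (u * e j) (dualBasisVec e N j) := by
        congr! 1 with j
        exact sum_mul_apply_dualBasisVec hN (f.flip (dualBasisVec e N j)) (u * e j)

theorem counit_coproduct_mul (hinv : ∀ u v w : A, η (u * v) w = η u (v * w))
    (hN : (Matrix.of fun i j => η (e i) (e j)) * N = 1) (u w : A) :
    ∑ i, ∑ j, ∑ a, ∑ b, η u (e i * e j) * N i a * N j b * η 1 (e a * e b * w) =
      η 1 (u * (∑ a, ∑ b, N a b • (e a * e b)) * w) := by
  have := sum_coproduct_apply hinv hN
    ((LinearMap.mul K A).compr₂ ((η 1).comp (LinearMap.mulRight K w))) u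
  simp only [LinearMap.compr₂_apply, LinearMap.comp_apply, LinearMap.mulRight_apply,
    LinearMap.mul_apply'] at this
  rw [this]
  simp only [dualBasisVec, Finset.mul_sum, Finset.sum_mul, mul_smul_comm, smul_mul_assoc,
    map_sum, map_smul]
  simp [mul_assoc]

theorem counit_coproduct_tensor (hinv : ∀ u v w : A, η (u * v) w = η u (v * w))
    (hN : (Matrix.of fun i j => η (e i) (e j)) * N = 1) (u X Y : A) :
    ∑ k, ∑ l, ∑ a, ∑ b, η u (e k * e l) * N k a * N l b * (η 1 (e a * X) * η 1 (e b * Y)) =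
      η 1 (u * X * Y) := by
  have := sum_coproduct_apply hinv hN ((LinearMap.mul K K).compl₁₂
    ((η 1).comp (LinearMap.mulRight K X)) ((η 1).comp (LinearMap.mulRight K Y))) u
  simp only [LinearMap.compl₁₂_apply, LinearMap.comp_apply, LinearMap.mulRight_apply,
    LinearMap.mul_apply'] at this
  rw [this]
  have hcontract := sum_mul_apply_dualBasisVec hN ((η 1).comp (LinearMap.mulRight K Y)) (u * X)
  simp only [LinearMap.comp_apply, LinearMap.mulRight_apply] at hcontract
  simpa only [apply_eq_apply_one_mul hinv (u * X), mul_right_comm u X (e _)] using hcontract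

end Frobenius

section Twist

variable {K A : Type*} [Field K] [CommRing A] [Algebra K A]
  {η : LinearMap.BilinForm K A} {s : ℕ} {e : Module.Basis (Fin s) K A}
  {N : Matrix (Fin s) (Fin s) K} {E : A} {C : ℤ → (n : ℕ) → (Fin n → ℕ) → K}

theorem sum_coproduct_twistC_genus (hinv : ∀ u v w : A, η (u * v) w = η u (v * w))
    (hN : (Matrix.of fun i j => η (e i) (e j)) * N = 1)
    (hE : E = ∑ a, ∑ b, N a b • (e a * e b))
    (hCneg : ∀ g : ℤ, g < 0 → ∀ (n : ℕ) (μ : Fin n → ℕ), C g n μ = 0)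
    (g : ℤ) {n : ℕ} (μ : Fin (n + 2) → ℕ) (u : A) (w : Fin n → A) :
    ∑ i, ∑ j, ∑ a, ∑ b, η u (e i * e j) * N i a * N j b *
        twistC η E C (g - 1) (n + 2) μ (Fin.cons (e a) (Fin.cons (e b) w)) =
      C (g - 1) (n + 2) μ * η 1 (u * (∏ i, w i) * E ^ g.toNat) := by
  rcases le_or_gt g 0 with hg | hg
  · simp [twistC, hCneg (g - 1) (by omega)]
  obtain ⟨k, hk⟩ : ∃ k : ℕ, g - 1 = k := ⟨(g - 1).toNat, by omega⟩
  have hgk : g.toNat = k + 1 := by omega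
  have hreassoc : ∀ a b, e a * (e b * ∏ i, w i) * E ^ k = e a * e b * ((∏ i, w i) * E ^ k) :=
    fun _ _ => by ring
  simp only [twistC, Fin.prod_cons, hk, hgk, Int.toNat_natCast, hreassoc]
  calc (∑ i, ∑ j, ∑ a, ∑ b, η u (e i * e j) * N i a * N j b *
        (C k (n + 2) μ * η 1 (e a * e b * ((∏ i, w i) * E ^ k))))
      = C k (n + 2) μ * ∑ i, ∑ j, ∑ a, ∑ b, η u (e i * e j) * N i a * N j b *
          η 1 (e a * e b * ((∏ i, w i) * E ^ k)) := by
        simp only [Finset.mul_sum]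
        congr! 4
        exact mul_left_comm _ _ _
    _ = C k (n + 2) μ * η 1 (u * (∏ i, w i) * E ^ (k + 1)) := by
        rw [counit_coproduct_mul hinv hN, ← hE]
        congr 2
        ring

theorem sum_coproduct_twistC_split (hinv : ∀ u v w : A, η (u * v) w = η u (v * w))
    (hN : (Matrix.of fun i j => η (e i) (e j)) * N = 1)
    (hCneg : ∀ g : ℤ, g < 0 → ∀ (n : ℕ) (μ : Fin n → ℕ), C g n μ = 0)
    (g₁ g₂ : ℤ) {n₁ n₂ : ℕ} (μ₁ : Fin (n₁ + 1) → ℕ) (μ₂ : Fin (n₂ + 1) → ℕ) (u : A)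
    (w₁ : Fin n₁ → A) (w₂ : Fin n₂ → A) :
    ∑ k, ∑ l, ∑ a, ∑ b, η u (e k * e l) * N k a * N l b *
        (twistC η E C g₁ (n₁ + 1) μ₁ (Fin.cons (e a) w₁) *
          twistC η E C g₂ (n₂ + 1) μ₂ (Fin.cons (e b) w₂)) =
      C g₁ (n₁ + 1) μ₁ * C g₂ (n₂ + 1) μ₂ *
        η 1 (u * ((∏ i, w₁ i) * ∏ i, w₂ i) * E ^ (g₁ + g₂).toNat) := by
  by_cases hneg : g₁ < 0 ∨ g₂ < 0
  · rcases hneg with hg | hg <;> simp [twistC, hCneg _ hg]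
  push Not at hneg
  obtain ⟨k₁, rfl⟩ := Int.eq_ofNat_of_zero_le hneg.1
  obtain ⟨k₂, rfl⟩ := Int.eq_ofNat_of_zero_le hneg.2
  simp only [twistC, Fin.prod_cons, ← Nat.cast_add, Int.toNat_natCast, mul_assoc (e _)]
  calc (∑ k, ∑ l, ∑ a, ∑ b, η u (e k * e l) * N k a * N l b *
        (C k₁ (n₁ + 1) μ₁ * η 1 (e a * ((∏ i, w₁ i) * E ^ k₁)) *
          (C k₂ (n₂ + 1) μ₂ * η 1 (e b * ((∏ i, w₂ i) * E ^ k₂)))))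
      = C k₁ (n₁ + 1) μ₁ * C k₂ (n₂ + 1) μ₂ * ∑ k, ∑ l, ∑ a, ∑ b,
          η u (e k * e l) * N k a * N l b *
            (η 1 (e a * ((∏ i, w₁ i) * E ^ k₁)) * η 1 (e b * ((∏ i, w₂ i) * E ^ k₂))) := by
        simp only [Finset.mul_sum]
        congr! 4
        rw [mul_mul_mul_comm (C _ _ _)]
        exact mul_left_comm _ _ _
    _ = C k₁ (n₁ + 1) μ₁ * C k₂ (n₂ + 1) μ₂ *
          η 1 (u * ((∏ i, w₁ i) * ∏ i, w₂ i) * E ^ (k₁ + k₂)) := by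
        rw [counit_coproduct_tensor hinv hN]
        congr 2
        ring

end Twist

theorem stmt10_general (K A : Type*) [Field K] [CommRing A] [Algebra K A]
    (η : LinearMap.BilinForm K A)
    (hinv : ∀ u v w : A, η (u * v) w = η u (v * w))
    {s : ℕ} (e : Module.Basis (Fin s) K A)
    (N : Matrix (Fin s) (Fin s) K)
    (hN : (Matrix.of fun i j => η (e i) (e j)) * N = 1)
    (E : A) (hE : E = ∑ a, ∑ b, N a b • (e a * e b))
    (C : ℤ → (n : ℕ) → (Fin n → ℕ) → K)
    (hCneg : ∀ g : ℤ, g < 0 → ∀ (n : ℕ) (μ : Fin n → ℕ), C g n μ = 0)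
    (hrec : ∀ (g m : ℕ) (μ : Fin (m + 1) → ℕ),
      0 < 2 * (g : ℤ) - 2 + (m + 1) → 1 ≤ μ 0 →
      C g (m + 1) μ =
        (∑ j : Fin m, (μ j.succ : K) *
            C g (({j}ᶜ : Finset (Fin m)).card + 1)
              (Fin.cons (μ 0 + μ j.succ - 2) (subT (Fin.tail μ) {j}ᶜ)))
        + ∑ α ∈ Finset.range (μ 0 - 1),
            (C ((g : ℤ) - 1) (m + 2)
                (Fin.cons α (Fin.cons (μ 0 - 2 - α) (Fin.tail μ)))
              + ∑ g₁ ∈ Finset.range (g + 1), ∑ S : Finset (Fin m),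
                  C g₁ (S.card + 1) (Fin.cons α (subT (Fin.tail μ) S)) *
                    C ((g : ℤ) - g₁) (Sᶜ.card + 1)
                      (Fin.cons (μ 0 - 2 - α) (subT (Fin.tail μ) Sᶜ)))) :
    ∀ (g m : ℕ) (μ : Fin (m + 1) → ℕ) (v : Fin (m + 1) → A),
      0 < 2 * (g : ℤ) - 2 + (m + 1) → 1 ≤ μ 0 →
      twistC η E C g (m + 1) μ v =
        (∑ j : Fin m, (μ j.succ : K) *
            twistC η E C g (({j}ᶜ : Finset (Fin m)).card + 1)
              (Fin.cons (μ 0 + μ j.succ - 2) (subT (Fin.tail μ) {j}ᶜ))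
              (Fin.cons (v 0 * v j.succ) (subT (Fin.tail v) {j}ᶜ)))
        + ∑ α ∈ Finset.range (μ 0 - 1),
            ((∑ i, ∑ j, ∑ a, ∑ b,
                η (v 0) (e i * e j) * N i a * N j b *
                  twistC η E C ((g : ℤ) - 1) (m + 2)
                    (Fin.cons α (Fin.cons (μ 0 - 2 - α) (Fin.tail μ)))
                    (Fin.cons (e a) (Fin.cons (e b) (Fin.tail v))))
              + ∑ g₁ ∈ Finset.range (g + 1), ∑ S : Finset (Fin m),
                  ∑ k, ∑ l, ∑ a, ∑ b,
                    η (v 0) (e k * e l) * N k a * N l b *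
                      (twistC η E C g₁ (S.card + 1)
                          (Fin.cons α (subT (Fin.tail μ) S))
                          (Fin.cons (e a) (subT (Fin.tail v) S)) *
                        twistC η E C ((g : ℤ) - g₁) (Sᶜ.card + 1)
                          (Fin.cons (μ 0 - 2 - α) (subT (Fin.tail μ) Sᶜ))
                          (Fin.cons (e b) (subT (Fin.tail v) Sᶜ)))) := by
  intro g m μ v hstab hμ
  have hv : v 0 * ∏ i, Fin.tail v i = ∏ i, v i := (Fin.prod_univ_succ v).symm
  simp only [sum_coproduct_twistC_genus hinv hN hE hCneg,
    sum_coproduct_twistC_split hinv hN hCneg, add_sub_cancel, Int.toNat_natCast, prod_subT,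
    Finset.prod_mul_prod_compl, hv]
  simp only [twistC, Fin.prod_cons, prod_subT, mul_mul_prod_compl_singleton_tail,
    Int.toNat_natCast]
  rw [hrec g m μ hstab hμ]
  simp only [add_mul, Finset.sum_mul, mul_assoc]

/-- (Twisted generalized Catalan/dessin recursion.) If the counting
functions `C_{g,n}` satisfy the generalized Catalan recursion, then their twists
`𝒞_{g,n}(μ; v) = C_{g,n}(μ)·Ω_{g,n}(v)` by the 2D TQFT of the Frobenius algebra `(A, η)`
satisfy the edge-contraction–twisted recursion, where the genus–reduction and splitting
terms are contracted through the coproduct coefficients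
`Σ_{i,j,a,b} η(v₁, e_i·e_j) η^{ia} η^{jb} (…e_a…)(…e_b…)`. -/
theorem stmt10 (K A : Type*) [Field K] [CommRing A] [Algebra K A]
    (η : LinearMap.BilinForm K A)
    (hsym : ∀ u v : A, η u v = η v u)
    (hnd : ∀ v : A, (∀ u : A, η v u = 0) → v = 0)
    (hinv : ∀ u v w : A, η (u * v) w = η u (v * w))
    {s : ℕ} (e : Module.Basis (Fin s) K A)
    (N : Matrix (Fin s) (Fin s) K)
    (hN : (Matrix.of fun i j => η (e i) (e j)) * N = 1)
    (hN' : N * (Matrix.of fun i j => η (e i) (e j)) = 1)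
    (E : A) (hE : E = ∑ a, ∑ b, N a b • (e a * e b))
    (C : ℤ → (n : ℕ) → (Fin n → ℕ) → K)
    (hCneg : ∀ g : ℤ, g < 0 → ∀ (n : ℕ) (μ : Fin n → ℕ), C g n μ = 0)
    (hrec : ∀ (g m : ℕ) (μ : Fin (m + 1) → ℕ),
      0 < 2 * (g : ℤ) - 2 + (m + 1) → 1 ≤ μ 0 →
      C g (m + 1) μ =
        (∑ j : Fin m, (μ j.succ : K) *
            C g (({j}ᶜ : Finset (Fin m)).card + 1)
              (Fin.cons (μ 0 + μ j.succ - 2) (subT (Fin.tail μ) {j}ᶜ)))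
        + ∑ α ∈ Finset.range (μ 0 - 1),
            (C ((g : ℤ) - 1) (m + 2)
                (Fin.cons α (Fin.cons (μ 0 - 2 - α) (Fin.tail μ)))
              + ∑ g₁ ∈ Finset.range (g + 1), ∑ S : Finset (Fin m),
                  C g₁ (S.card + 1) (Fin.cons α (subT (Fin.tail μ) S)) *
                    C ((g : ℤ) - g₁) (Sᶜ.card + 1)
                      (Fin.cons (μ 0 - 2 - α) (subT (Fin.tail μ) Sᶜ)))) :
    ∀ (g m : ℕ) (μ : Fin (m + 1) → ℕ) (v : Fin (m + 1) → A),
      0 < 2 * (g : ℤ) - 2 + (m + 1) → 1 ≤ μ 0 →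
      twistC η E C g (m + 1) μ v =
        (∑ j : Fin m, (μ j.succ : K) *
            twistC η E C g (({j}ᶜ : Finset (Fin m)).card + 1)
              (Fin.cons (μ 0 + μ j.succ - 2) (subT (Fin.tail μ) {j}ᶜ))
              (Fin.cons (v 0 * v j.succ) (subT (Fin.tail v) {j}ᶜ)))
        + ∑ α ∈ Finset.range (μ 0 - 1),
            ((∑ i, ∑ j, ∑ a, ∑ b,
                η (v 0) (e i * e j) * N i a * N j b *
                  twistC η E C ((g : ℤ) - 1) (m + 2)
                    (Fin.cons α (Fin.cons (μ 0 - 2 - α) (Fin.tail μ)))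
                    (Fin.cons (e a) (Fin.cons (e b) (Fin.tail v))))
              + ∑ g₁ ∈ Finset.range (g + 1), ∑ S : Finset (Fin m),
                  ∑ k, ∑ l, ∑ a, ∑ b,
                    η (v 0) (e k * e l) * N k a * N l b *
                      (twistC η E C g₁ (S.card + 1)
                          (Fin.cons α (subT (Fin.tail μ) S))
                          (Fin.cons (e a) (subT (Fin.tail v) S)) *
                        twistC η E C ((g : ℤ) - g₁) (Sᶜ.card + 1)
                          (Fin.cons (μ 0 - 2 - α) (subT (Fin.tail μ) Sᶜ))
                          (Fin.cons (e b) (subT (Fin.tail v) Sᶜ)))) :=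
  stmt10_general K A η hinv e N hN E hE C hCneg hrec
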